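/- arXiv:2605.03478 — 2 statements merged into one kernel-verified Lean document; each statement's English description precedes it below -/
import Mathlib

section
/- Let G be a finite simple graph with an orientation of its edges and triangles. Let μ₁ ≥ ... ≥ μ_n be the eigenvalues of the Laplacian matrix L(G) and let η₁ ≥ ... ≥ η_t be the eigenvalues of the adjacency matrix A(G_△) of the triangular signed graph. Then the multiset of non-zero eigenvalues of the Helmholtzian matrix H(G) equals the multiset consisting of all non-zero μ_i together with all values 3 + η_j that are non-zero. In particular, every non-zero Laplacian eigenvalue of G is an H-eigenvalue of G, and the largest H-eigenvalue is max{μ₁, 3 + η₁}. -/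
/-!
With `B` the edge–vertex and `C` the triangle–edge incidence matrix, `C * B = 0` (the boundary of
the boundary of a triangle vanishes) and `C * Cᵀ = 3 • 1 + A(G_△)` (a triangle has three edges,
and two distinct triangles share at most one). Hence `(B * Bᵀ) * (Cᵀ * C) = B * (C * B)ᵀ * C = 0`,
which forces `χ(B Bᵀ) χ(Cᵀ C) = X ^ m χ(H)`: the non-zero spectrum of `H = B Bᵀ + Cᵀ C` is that of
`B Bᵀ` together with that of `Cᵀ C`. As `X Y` and `Y X` share their non-zero spectrum, these are
the non-zero spectra of `L = Bᵀ B` and of `C Cᵀ`. All matrices involved are positive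
semidefinite, so their largest eigenvalues are read off the non-zero parts.
-/

open scoped Classical
open scoped Matrix

namespace HelmPaper

variable {V : Type} [Fintype V] [DecidableEq V]

/-- The set of triangles of `G`, i.e. the 3-element cliques of `G`. -/
abbrev Triangle (G : SimpleGraph V) : Type :=
  {s : Finset V // s.card = 3 ∧ G.IsClique (s : Set V)}

/-- An orientation of the edges of `G`: each edge `e` gets a head `e⁺` and a tail `e⁻`. -/
structure Orientation (G : SimpleGraph V) where
  head : G.edgeSet → V
  tail : G.edgeSet → V
  consistent : ∀ e : G.edgeSet, (e : Sym2 V) = s(head e, tail e)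

/-- A cyclic orientation of each triangle of `G`, recorded by a representative ordered
triple of its three vertices. -/
structure TriOrientation (G : SimpleGraph V) where
  fst : Triangle G → V
  snd : Triangle G → V
  trd : Triangle G → V
  consistent : ∀ t : Triangle G, ({fst t, snd t, trd t} : Finset V) = t.val

/-- The edge-vertex incidence matrix `B`. -/
noncomputable def bMat (G : SimpleGraph V) (o : Orientation G) : Matrix G.edgeSet V ℝ :=
  fun e v => if v = o.head e then 1 else if v = o.tail e then -1 else 0

/-- The oriented edge `e` agrees with the cyclic orientation of the triangle `t`. -/
def Agrees {G : SimpleGraph V} (o : Orientation G) (τ : TriOrientation G)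
    (e : G.edgeSet) (t : Triangle G) : Prop :=
  (o.tail e = τ.fst t ∧ o.head e = τ.snd t) ∨
  (o.tail e = τ.snd t ∧ o.head e = τ.trd t) ∨
  (o.tail e = τ.trd t ∧ o.head e = τ.fst t)

/-- The oriented edge `e` disagrees with the cyclic orientation of the triangle `t`. -/
def Disagrees {G : SimpleGraph V} (o : Orientation G) (τ : TriOrientation G)
    (e : G.edgeSet) (t : Triangle G) : Prop :=
  (o.head e = τ.fst t ∧ o.tail e = τ.snd t) ∨
  (o.head e = τ.snd t ∧ o.tail e = τ.trd t) ∨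
  (o.head e = τ.trd t ∧ o.tail e = τ.fst t)

/-- The triangle-edge incidence matrix `C`. -/
noncomputable def cMat (G : SimpleGraph V) (o : Orientation G) (τ : TriOrientation G) :
    Matrix (Triangle G) G.edgeSet ℝ :=
  fun t e => if Agrees o τ e t then 1 else if Disagrees o τ e t then -1 else 0

/-- The Helmholtzian matrix `H(G) = B Bᵀ + Cᵀ C`. -/
noncomputable def helm (G : SimpleGraph V) (o : Orientation G) (τ : TriOrientation G) :
    Matrix G.edgeSet G.edgeSet ℝ :=
  bMat G o * (bMat G o)ᵀ + (cMat G o τ)ᵀ * cMat G o τ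

/-- The edge `e` (as an unordered pair of vertices) lies in the triangle `t`. -/
def EdgeInTri (G : SimpleGraph V) (e : Sym2 V) (t : Triangle G) : Prop :=
  ∀ v ∈ e, v ∈ t.val

/-- The triangle degree `△(e)`: the number of triangles of `G` containing the edge `e`. -/
noncomputable def triDeg (G : SimpleGraph V) (e : Sym2 V) : ℕ :=
  (Finset.univ.filter fun t : Triangle G => EdgeInTri G e t).card

/-- The adjacency matrix of the triangular signed graph `G_△`: for distinct triangles
sharing a common edge `e`, the entry is `1` if the orientation of `e` agrees with both
triangles or disagrees with both, and `-1` otherwise; all other entries are `0`. -/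
noncomputable def triAdj (G : SimpleGraph V) (o : Orientation G) (τ : TriOrientation G) :
    Matrix (Triangle G) (Triangle G) ℝ :=
  fun t₁ t₂ =>
    if t₁ ≠ t₂ ∧ ∃ e : G.edgeSet, EdgeInTri G (e : Sym2 V) t₁ ∧ EdgeInTri G (e : Sym2 V) t₂ ∧
        ((Agrees o τ e t₁ ∧ Agrees o τ e t₂) ∨ (Disagrees o τ e t₁ ∧ Disagrees o τ e t₂))
    then 1
    else if t₁ ≠ t₂ ∧ ∃ e : G.edgeSet, EdgeInTri G (e : Sym2 V) t₁ ∧ EdgeInTri G (e : Sym2 V) t₂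
    then -1
    else 0

end HelmPaper

namespace HelmPaper

section Charpoly

open Polynomial

variable {R : Type*} [CommRing R] {m n : Type*} [Fintype m] [DecidableEq m]
  [Fintype n] [DecidableEq n]

theorem charpoly_mul_charpoly_of_mul_eq_zero {M N : Matrix n n R} (h : M * N = 0) :
    M.charpoly * N.charpoly = X ^ Fintype.card n * (M + N).charpoly := by
  set M' := (C : R →+* R[X]).mapMatrix M
  set N' := (C : R →+* R[X]).mapMatrix N
  have hMN : M' * N' = 0 := by simp only [M', N', ← map_mul, h, map_zero]
  have hX : Commute (Matrix.scalar n (X : R[X])) M' :=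
    Matrix.scalar_commute _ (fun _ => Commute.all _ _) _
  have key : M.charmatrix * N.charmatrix = Matrix.scalar n (X : R[X]) * (M + N).charmatrix := by
    simp only [Matrix.charmatrix, map_add]
    rw [sub_mul, mul_sub, mul_sub, hMN, ← hX.eq, mul_sub, mul_add]
    abel
  simpa [Matrix.charpoly, Matrix.det_mul] using congrArg Matrix.det key

theorem filter_roots_ne_zero_eq_of_X_pow_mul_eq [IsDomain R] [DecidableEq R] {p q : R[X]}
    (hp : p ≠ 0) (hq : q ≠ 0) {a b : ℕ} (h : X ^ a * p = X ^ b * q) :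
    p.roots.filter (· ≠ 0) = q.roots.filter (· ≠ 0) := by
  have hroots := congrArg (fun r : R[X] => r.roots.filter (· ≠ 0)) h
  simpa [roots_mul, hp, hq, X_ne_zero, Multiset.filter_add, Multiset.filter_nsmul,
    Multiset.filter_singleton] using hroots

theorem filter_roots_charpoly_mul_comm [IsDomain R] [DecidableEq R] (A : Matrix m n R)
    (B : Matrix n m R) :
    (A * B).charpoly.roots.filter (· ≠ 0) = (B * A).charpoly.roots.filter (· ≠ 0) :=
  filter_roots_ne_zero_eq_of_X_pow_mul_eq (Matrix.charpoly_monic _).ne_zero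
    (Matrix.charpoly_monic _).ne_zero (Matrix.charpoly_mul_comm' A B)

theorem filter_roots_charpoly_add_of_mul_eq_zero [IsDomain R] [DecidableEq R]
    {M N : Matrix n n R} (h : M * N = 0) :
    (M + N).charpoly.roots.filter (· ≠ 0) =
      M.charpoly.roots.filter (· ≠ 0) + N.charpoly.roots.filter (· ≠ 0) := by
  have hMN := (Matrix.charpoly_monic M).mul (Matrix.charpoly_monic N)
  rw [← Multiset.filter_add, ← roots_mul hMN.ne_zero]
  refine filter_roots_ne_zero_eq_of_X_pow_mul_eq (a := Fintype.card n) (b := 0)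
    (Matrix.charpoly_monic _).ne_zero hMN.ne_zero ?_
  rw [pow_zero, one_mul, charpoly_mul_charpoly_of_mul_eq_zero h]

end Charpoly

theorem filter_roots_charpoly_add_eq {R : Type*} [CommRing R] [IsDomain R] [DecidableEq R]
    {m n k : Type*} [Fintype m] [DecidableEq m] [Fintype n] [DecidableEq n] [Fintype k]
    [DecidableEq k] (B : Matrix m n R) (C : Matrix k m R) (hCB : C * B = 0) :
    (B * Bᵀ + Cᵀ * C).charpoly.roots.filter (· ≠ 0) =
      (Bᵀ * B).charpoly.roots.filter (· ≠ 0) + (C * Cᵀ).charpoly.roots.filter (· ≠ 0) := by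
  have hBC : B * Bᵀ * (Cᵀ * C) = 0 := by
    rw [Matrix.mul_assoc, ← Matrix.mul_assoc Bᵀ, ← Matrix.transpose_mul, hCB,
      Matrix.transpose_zero, Matrix.zero_mul, Matrix.mul_zero]
  rw [filter_roots_charpoly_add_of_mul_eq_zero hBC, filter_roots_charpoly_mul_comm B,
    filter_roots_charpoly_mul_comm Cᵀ]

section Spectrum

theorem sSup_insert_zero_of_nonneg {s : Set ℝ} (hs : BddAbove s) (h0 : ∀ x ∈ s, 0 ≤ x) :
    sSup (insert 0 s) = sSup s := by
  rcases s.eq_empty_or_nonempty with rfl | hne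
  · simp [Real.sSup_empty]
  · rw [csSup_insert hs hne, sup_of_le_right (Real.sSup_nonneg h0)]

theorem sSup_eq_max_of_insert_zero_eq {s t u : Set ℝ} (hs : BddAbove s) (ht : BddAbove t)
    (hu : BddAbove u) (hs0 : ∀ x ∈ s, 0 ≤ x) (ht0 : ∀ x ∈ t, 0 ≤ x) (hu0 : ∀ x ∈ u, 0 ≤ x)
    (h : insert 0 s = insert 0 t ∪ insert 0 u) :
    sSup s = max (sSup t) (sSup u) := by
  rw [← sSup_insert_zero_of_nonneg hs hs0, h, csSup_union (ht.insert 0) (Set.insert_nonempty _ _)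
    (hu.insert 0) (Set.insert_nonempty _ _), sSup_insert_zero_of_nonneg ht ht0,
    sSup_insert_zero_of_nonneg hu hu0]

theorem posSemidef_transpose_mul_self {m n : Type*} [Fintype m] [Fintype n] (A : Matrix m n ℝ) :
    (Aᵀ * A).PosSemidef := by
  simpa only [Matrix.conjTranspose_eq_transpose_of_trivial] using
    Matrix.posSemidef_conjTranspose_mul_self A

variable {n : Type*} [Fintype n] [DecidableEq n]

theorem insert_zero_spectrum_eq (M : Matrix n n ℝ) :
    insert 0 (spectrum ℝ M) = insert 0 {x | x ∈ M.charpoly.roots.filter (· ≠ 0)} := by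
  ext x
  by_cases hx : x = 0
  · simp [hx]
  · simp [hx, Matrix.mem_spectrum_iff_isRoot_charpoly, (Matrix.charpoly_monic M).ne_zero]

theorem spectrum_nonneg_of_posSemidef {M : Matrix n n ℝ} (hM : M.PosSemidef) :
    ∀ x ∈ spectrum ℝ M, 0 ≤ x :=
  (Matrix.posSemidef_iff_isHermitian_and_spectrum_nonneg.1 hM).2

variable {m k : Type*} [Fintype m] [DecidableEq m] [Fintype k] [DecidableEq k]

theorem sSup_spectrum_eq_max_of_filter_roots_eq {H : Matrix n n ℝ} {L : Matrix m m ℝ}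
    {T : Matrix k k ℝ} (hH : H.PosSemidef) (hL : L.PosSemidef) (hT : T.PosSemidef)
    (h : H.charpoly.roots.filter (· ≠ 0) =
      L.charpoly.roots.filter (· ≠ 0) + T.charpoly.roots.filter (· ≠ 0)) :
    sSup (spectrum ℝ H) = max (sSup (spectrum ℝ L)) (sSup (spectrum ℝ T)) := by
  refine sSup_eq_max_of_insert_zero_eq H.finite_spectrum.bddAbove L.finite_spectrum.bddAbove
    T.finite_spectrum.bddAbove (spectrum_nonneg_of_posSemidef hH)
    (spectrum_nonneg_of_posSemidef hL) (spectrum_nonneg_of_posSemidef hT) ?_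
  rw [insert_zero_spectrum_eq, insert_zero_spectrum_eq, insert_zero_spectrum_eq, h]
  ext x
  simp only [Set.mem_insert_iff, Set.mem_union, Set.mem_ofPred_eq, Multiset.mem_add]
  tauto

end Spectrum

section Triangle

variable {V : Type} {G : SimpleGraph V}

theorem Orientation.head_ne_tail (o : Orientation G) (e : G.edgeSet) : o.head e ≠ o.tail e := by
  have he := e.2
  rw [o.consistent e, SimpleGraph.mem_edgeSet] at he
  exact he.ne

variable [DecidableEq V]

theorem bMat_apply (o : Orientation G) (e : G.edgeSet) (v : V) :
    bMat G o e v = (if v = o.head e then 1 else 0) - (if v = o.tail e then 1 else 0) := by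
  have := o.head_ne_tail e
  unfold bMat
  split_ifs <;> simp_all

theorem eq_of_edgeInTri {t₁ t₂ : Triangle G} (ht : t₁ ≠ t₂) {e₁ e₂ : G.edgeSet}
    (h₁₁ : EdgeInTri G e₁ t₁) (h₁₂ : EdgeInTri G e₁ t₂) (h₂₁ : EdgeInTri G e₂ t₁)
    (h₂₂ : EdgeInTri G e₂ t₂) : e₁ = e₂ := by
  have hcard : (t₁.val ∩ t₂.val).card ≤ 2 := by
    by_contra! h
    have hsub : t₁.val ⊆ t₂.val := Finset.inter_eq_left.1
      (Finset.eq_of_subset_of_card_le Finset.inter_subset_left (by rw [t₁.2.1]; omega))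
    exact ht (Subtype.ext (Finset.eq_of_subset_of_card_le hsub (by rw [t₁.2.1, t₂.2.1])))
  rcases e₁ with ⟨z₁, hz₁⟩
  rcases e₂ with ⟨z₂, hz₂⟩
  induction z₁ using Sym2.ind with | h x y => ?_
  induction z₂ using Sym2.ind with | h a b => ?_
  have hinter : t₁.val ∩ t₂.val = {x, y} := by
    refine (Finset.eq_of_subset_of_card_le (fun v hv => ?_)
      (by rwa [Finset.card_pair (G.ne_of_adj hz₁)])).symm
    rw [Finset.mem_insert, Finset.mem_singleton] at hv
    rcases hv with rfl | rfl
    · exact Finset.mem_inter.2 ⟨h₁₁ _ (Sym2.mem_mk_left _ _), h₁₂ _ (Sym2.mem_mk_left _ _)⟩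
    · exact Finset.mem_inter.2 ⟨h₁₁ _ (Sym2.mem_mk_right _ _), h₁₂ _ (Sym2.mem_mk_right _ _)⟩
  have hmem : ∀ v ∈ s(a, b), v ∈ s(x, y) := fun v hv => by
    have hv' := Finset.mem_inter.2 ⟨h₂₁ v hv, h₂₂ v hv⟩
    rw [hinter, Finset.mem_insert, Finset.mem_singleton] at hv'
    exact Sym2.mem_iff.2 hv'
  exact Subtype.ext (Sym2.eq_of_ne_mem (G.ne_of_adj hz₂) (hmem _ (Sym2.mem_mk_left _ _))
    (hmem _ (Sym2.mem_mk_right _ _)) (Sym2.mem_mk_left _ _) (Sym2.mem_mk_right _ _))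

namespace TriOrientation

variable (τ : TriOrientation G) (t : Triangle G)

def vert : Fin 3 → V := ![τ.fst t, τ.snd t, τ.trd t]

theorem vert_injective : Function.Injective (τ.vert t) := by
  have hcard : ({τ.fst t, τ.snd t, τ.trd t} : Finset V).card = 3 := by
    rw [τ.consistent t]; exact t.2.1
  have hne : τ.fst t ≠ τ.snd t ∧ τ.fst t ≠ τ.trd t ∧ τ.snd t ≠ τ.trd t := by
    grind [Finset.card_le_two, Finset.card_insert_of_mem, Finset.card_singleton]
  intro i j h
  fin_cases i <;> fin_cases j <;> simp_all [vert, eq_comm]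

theorem vert_mem (i : Fin 3) : τ.vert t i ∈ t.val := by
  rw [← τ.consistent t]
  fin_cases i <;> simp [vert]

theorem vert_adj (i : Fin 3) : G.Adj (τ.vert t i) (τ.vert t (i + 1)) :=
  t.2.2 (τ.vert_mem t i) (τ.vert_mem t (i + 1)) ((τ.vert_injective t).ne (by omega))

def edge (i : Fin 3) : G.edgeSet := ⟨s(τ.vert t i, τ.vert t (i + 1)), τ.vert_adj t i⟩

theorem edge_injective : Function.Injective (τ.edge t) := by
  intro i j h
  have := Subtype.ext_iff.1 h
  simp only [edge, Sym2.eq_iff, (τ.vert_injective t).eq_iff] at this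
  omega

theorem mem_iff_exists_vert (x : V) : x ∈ t.val ↔ ∃ i, τ.vert t i = x := by
  rw [← τ.consistent t]
  simp [Fin.exists_fin_succ, vert, eq_comm]

theorem edgeInTri_iff_mem_range_edge (e : G.edgeSet) :
    EdgeInTri G e t ↔ e ∈ Set.range (τ.edge t) := by
  constructor
  · rcases e with ⟨z, hz⟩
    induction z using Sym2.ind with | h x y => ?_
    intro h
    obtain ⟨a, rfl⟩ := (τ.mem_iff_exists_vert t x).1 (h x (Sym2.mem_mk_left x y))
    obtain ⟨b, rfl⟩ := (τ.mem_iff_exists_vert t y).1 (h y (Sym2.mem_mk_right _ y))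
    have hab : a ≠ b := fun hab => G.ne_of_adj hz (congrArg (τ.vert t) hab)
    rcases (by omega : b = a + 1 ∨ a = b + 1) with rfl | rfl
    · exact ⟨a, rfl⟩
    · exact ⟨b, Subtype.ext Sym2.eq_swap⟩
  · rintro ⟨i, rfl⟩ x hx
    rcases Sym2.mem_iff.1 hx with rfl | rfl <;> exact τ.vert_mem t _

variable (o : Orientation G) {t}

theorem agrees_iff {e : G.edgeSet} :
    Agrees o τ e t ↔ ∃ i, o.tail e = τ.vert t i ∧ o.head e = τ.vert t (i + 1) := by
  simp [Agrees, Fin.exists_fin_succ, vert]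

theorem disagrees_iff {e : G.edgeSet} :
    Disagrees o τ e t ↔ ∃ i, o.head e = τ.vert t i ∧ o.tail e = τ.vert t (i + 1) := by
  simp [Disagrees, Fin.exists_fin_succ, vert]

theorem head_tail_edge (i : Fin 3) :
    (o.head (τ.edge t i) = τ.vert t (i + 1) ∧ o.tail (τ.edge t i) = τ.vert t i) ∨
      (o.head (τ.edge t i) = τ.vert t i ∧ o.tail (τ.edge t i) = τ.vert t (i + 1)) := by
  have h := (o.consistent (τ.edge t i)).symm
  rw [edge, Sym2.eq_iff] at h
  tauto

theorem not_agrees_of_disagrees {e : G.edgeSet} (h : Disagrees o τ e t) : ¬Agrees o τ e t := by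
  rw [agrees_iff]
  rintro ⟨j, hj₁, hj₂⟩
  obtain ⟨i, hi₁, hi₂⟩ := (τ.disagrees_iff o).1 h
  have := τ.vert_injective t (hi₁.symm.trans hj₂)
  have := τ.vert_injective t (hi₂.symm.trans hj₁)
  omega

theorem not_disagrees_of_agrees {e : G.edgeSet} (h : Agrees o τ e t) : ¬Disagrees o τ e t :=
  fun hD => τ.not_agrees_of_disagrees o hD h

theorem cMat_of_agrees {e : G.edgeSet} (h : Agrees o τ e t) : cMat G o τ t e = 1 :=
  if_pos h

theorem cMat_of_disagrees {e : G.edgeSet} (h : Disagrees o τ e t) : cMat G o τ t e = -1 := by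
  rw [cMat, if_neg (τ.not_agrees_of_disagrees o h), if_pos h]

theorem agrees_or_disagrees_of_edgeInTri {e : G.edgeSet} (h : EdgeInTri G e t) :
    Agrees o τ e t ∨ Disagrees o τ e t := by
  obtain ⟨i, rfl⟩ := (τ.edgeInTri_iff_mem_range_edge t e).1 h
  rcases τ.head_tail_edge o i with ⟨hh, ht⟩ | ⟨hh, ht⟩
  · exact Or.inl ((τ.agrees_iff o).2 ⟨i, ht, hh⟩)
  · exact Or.inr ((τ.disagrees_iff o).2 ⟨i, hh, ht⟩)

theorem cMat_eq_zero_of_not_edgeInTri {e : G.edgeSet} (h : ¬EdgeInTri G e t) :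
    cMat G o τ t e = 0 := by
  have hA : ¬Agrees o τ e t := by
    rw [agrees_iff]
    rintro ⟨i, ht, hh⟩
    refine h ((τ.edgeInTri_iff_mem_range_edge t e).2 ⟨i, Subtype.ext ?_⟩)
    rw [o.consistent e, hh, ht]
    exact Sym2.eq_swap
  have hD : ¬Disagrees o τ e t := by
    rw [disagrees_iff]
    rintro ⟨i, hh, ht⟩
    refine h ((τ.edgeInTri_iff_mem_range_edge t e).2 ⟨i, Subtype.ext ?_⟩)
    rw [o.consistent e, hh, ht]
    rfl
  rw [cMat, if_neg hA, if_neg hD]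

theorem cMat_edge_mul_bMat (i : Fin 3) (v : V) :
    cMat G o τ t (τ.edge t i) * bMat G o (τ.edge t i) v =
      (if v = τ.vert t (i + 1) then 1 else 0) - (if v = τ.vert t i then 1 else 0) := by
  rw [bMat_apply]
  rcases τ.head_tail_edge o i with ⟨hh, ht⟩ | ⟨hh, ht⟩
  · rw [τ.cMat_of_agrees o ((τ.agrees_iff o).2 ⟨i, ht, hh⟩), hh, ht, one_mul]
  · rw [τ.cMat_of_disagrees o ((τ.disagrees_iff o).2 ⟨i, hh, ht⟩), hh, ht]
    ring

theorem cMat_mul_cMat_of_edgeInTri {t₁ t₂ : Triangle G} {e : G.edgeSet}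
    (h₁ : EdgeInTri G e t₁) (h₂ : EdgeInTri G e t₂) :
    cMat G o τ t₁ e * cMat G o τ t₂ e =
      if (Agrees o τ e t₁ ∧ Agrees o τ e t₂) ∨ (Disagrees o τ e t₁ ∧ Disagrees o τ e t₂)
      then 1 else -1 := by
  rcases τ.agrees_or_disagrees_of_edgeInTri o h₁ with h₁ | h₁ <;>
    rcases τ.agrees_or_disagrees_of_edgeInTri o h₂ with h₂ | h₂ <;>
    simp [τ.cMat_of_agrees o, τ.cMat_of_disagrees o, τ.not_agrees_of_disagrees o,
      τ.not_disagrees_of_agrees o, h₁, h₂]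

theorem cMat_edge_mul_self (i : Fin 3) :
    cMat G o τ t (τ.edge t i) * cMat G o τ t (τ.edge t i) = 1 := by
  rcases τ.agrees_or_disagrees_of_edgeInTri o
    ((τ.edgeInTri_iff_mem_range_edge t _).2 ⟨i, rfl⟩) with h | h
  · rw [τ.cMat_of_agrees o h, one_mul]
  · rw [τ.cMat_of_disagrees o h, neg_one_mul, neg_neg]

theorem cMat_mul_cMat_eq_zero {t₁ t₂ : Triangle G} {e : G.edgeSet}
    (h : ¬(EdgeInTri G e t₁ ∧ EdgeInTri G e t₂)) : cMat G o τ t₁ e * cMat G o τ t₂ e = 0 := by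
  rcases not_and_or.1 h with h | h
  · rw [τ.cMat_eq_zero_of_not_edgeInTri o h, zero_mul]
  · rw [τ.cMat_eq_zero_of_not_edgeInTri o h, mul_zero]

theorem sum_cMat_mul [Fintype V] (t : Triangle G) (f : G.edgeSet → ℝ) :
    ∑ e, cMat G o τ t e * f e = ∑ i, cMat G o τ t (τ.edge t i) * f (τ.edge t i) := by
  refine (Fintype.sum_of_injective _ (τ.edge_injective t) _ _ (fun e he => ?_) fun _ => rfl).symm
  rw [τ.cMat_eq_zero_of_not_edgeInTri o (by rwa [edgeInTri_iff_mem_range_edge]), zero_mul]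

end TriOrientation

variable [Fintype V]

theorem triAdj_apply_self (o : Orientation G) (τ : TriOrientation G) (t : Triangle G) :
    triAdj G o τ t t = 0 := by
  simp [triAdj]

theorem triAdj_apply_of_edgeInTri (o : Orientation G) (τ : TriOrientation G)
    {t₁ t₂ : Triangle G} (ht : t₁ ≠ t₂) {e : G.edgeSet} (h₁ : EdgeInTri G e t₁)
    (h₂ : EdgeInTri G e t₂) :
    triAdj G o τ t₁ t₂ =
      if (Agrees o τ e t₁ ∧ Agrees o τ e t₂) ∨ (Disagrees o τ e t₁ ∧ Disagrees o τ e t₂)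
      then 1 else -1 := by
  by_cases hP : (Agrees o τ e t₁ ∧ Agrees o τ e t₂) ∨ (Disagrees o τ e t₁ ∧ Disagrees o τ e t₂)
  · rw [if_pos hP, triAdj, if_pos ⟨ht, e, h₁, h₂, hP⟩]
  · rw [if_neg hP, triAdj, if_neg, if_pos ⟨ht, e, h₁, h₂⟩]
    rintro ⟨-, e', h₁', h₂', hP'⟩
    rw [eq_of_edgeInTri ht h₁' h₂' h₁ h₂] at hP'
    exact hP hP'

theorem triAdj_apply_of_not_exists (o : Orientation G) (τ : TriOrientation G)
    {t₁ t₂ : Triangle G} (h : ¬∃ e : G.edgeSet, EdgeInTri G e t₁ ∧ EdgeInTri G e t₂) :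
    triAdj G o τ t₁ t₂ = 0 := by
  unfold triAdj
  rw [if_neg fun ⟨_, e, h₁, h₂, _⟩ => h ⟨e, h₁, h₂⟩, if_neg fun ⟨_, hc⟩ => h hc]

end Triangle

section Incidence

variable {V : Type} [Fintype V] [DecidableEq V] (G : SimpleGraph V) (o : Orientation G)
  (τ : TriOrientation G)

theorem cMat_mul_bMat : cMat G o τ * bMat G o = 0 := by
  ext t v
  rw [Matrix.mul_apply, τ.sum_cMat_mul o t fun e => bMat G o e v, Matrix.zero_apply]
  simp only [τ.cMat_edge_mul_bMat o, Finset.sum_sub_distrib, sub_eq_zero]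
  -- the boundary of the cycle `vert 0 → vert 1 → vert 2 → vert 0` telescopes
  exact Equiv.sum_comp (Equiv.addRight 1) fun i => if v = τ.vert t i then (1 : ℝ) else 0

theorem cMat_mul_transpose_cMat :
    cMat G o τ * (cMat G o τ)ᵀ =
      (3 : ℝ) • (1 : Matrix (Triangle G) (Triangle G) ℝ) + triAdj G o τ := by
  ext t₁ t₂
  simp only [Matrix.mul_apply, Matrix.transpose_apply, Matrix.add_apply, Matrix.smul_apply,
    Matrix.one_apply]
  rcases eq_or_ne t₁ t₂ with rfl | ht
  · simp [τ.sum_cMat_mul o t₁, τ.cMat_edge_mul_self o, triAdj_apply_self]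
  by_cases hcom : ∃ e : G.edgeSet, EdgeInTri G e t₁ ∧ EdgeInTri G e t₂
  · obtain ⟨e, h₁, h₂⟩ := hcom
    rw [Finset.sum_eq_single e, τ.cMat_mul_cMat_of_edgeInTri o h₁ h₂,
      triAdj_apply_of_edgeInTri o τ ht h₁ h₂, if_neg ht, smul_zero, zero_add]
    · intro e' _ hne
      exact τ.cMat_mul_cMat_eq_zero o fun h => hne (eq_of_edgeInTri ht h.1 h.2 h₁ h₂)
    · simp
  · rw [triAdj_apply_of_not_exists o τ hcom, if_neg ht, smul_zero, zero_add]
    exact Finset.sum_eq_zero fun e _ => τ.cMat_mul_cMat_eq_zero o fun h => hcom ⟨e, h⟩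

end Incidence

variable {V : Type} [Fintype V] [DecidableEq V]

theorem statement6_general (G : SimpleGraph V) (o : Orientation G) (τ : TriOrientation G) :
    ((helm G o τ).charpoly.roots.filter fun x => x ≠ 0) =
      (((bMat G o)ᵀ * bMat G o).charpoly.roots.filter fun x => x ≠ 0) +
      ((((3 : ℝ) • (1 : Matrix (Triangle G) (Triangle G) ℝ) +
          triAdj G o τ).charpoly.roots.filter) fun x => x ≠ 0) ∧
    (∀ μ : ℝ, μ ∈ ((bMat G o)ᵀ * bMat G o).charpoly.roots → μ ≠ 0 →
      μ ∈ (helm G o τ).charpoly.roots) ∧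
    sSup (spectrum ℝ (helm G o τ)) =
      max (sSup (spectrum ℝ ((bMat G o)ᵀ * bMat G o)))
        (sSup (spectrum ℝ
          ((3 : ℝ) • (1 : Matrix (Triangle G) (Triangle G) ℝ) + triAdj G o τ))) := by
  have hroots := filter_roots_charpoly_add_eq (bMat G o) (cMat G o τ) (cMat_mul_bMat G o τ)
  rw [cMat_mul_transpose_cMat, ← helm] at hroots
  -- the last filter of the statement uses the classical `DecidablePred` instance
  refine ⟨by convert hroots using 3, fun μ hμ hμ0 => ?_, ?_⟩
  · have : μ ∈ (helm G o τ).charpoly.roots.filter (· ≠ 0) :=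
      hroots ▸ Multiset.mem_add.2 (Or.inl (Multiset.mem_filter.2 ⟨hμ, hμ0⟩))
    exact (Multiset.mem_filter.1 this).1
  · refine sSup_spectrum_eq_max_of_filter_roots_eq ?_ (posSemidef_transpose_mul_self _) ?_ hroots
    · simpa [helm] using (posSemidef_transpose_mul_self (bMat G o)ᵀ).add
        (posSemidef_transpose_mul_self (cMat G o τ))
    · simpa [cMat_mul_transpose_cMat] using posSemidef_transpose_mul_self (cMat G o τ)ᵀ

/-- The multiset of non-zero eigenvalues of `H(G)` is the union of the
multiset of non-zero eigenvalues of the Laplacian `L(G) = Bᵀ B` and the multiset of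
non-zero values among the eigenvalues of `3I + A(G_△)` (i.e. the values `3 + ηⱼ`).
In particular every non-zero Laplacian eigenvalue of `G` is an `H`-eigenvalue of `G`, and
the largest `H`-eigenvalue is `max {μ₁, 3 + η₁}`. -/
theorem statement6 (G : SimpleGraph V) (o : Orientation G) (τ : TriOrientation G)
    [Nonempty G.edgeSet] :
    ((helm G o τ).charpoly.roots.filter fun x => x ≠ 0) =
      (((bMat G o)ᵀ * bMat G o).charpoly.roots.filter fun x => x ≠ 0) +
      ((((3 : ℝ) • (1 : Matrix (Triangle G) (Triangle G) ℝ) +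
          triAdj G o τ).charpoly.roots.filter) fun x => x ≠ 0) ∧
    (∀ μ : ℝ, μ ∈ ((bMat G o)ᵀ * bMat G o).charpoly.roots → μ ≠ 0 →
      μ ∈ (helm G o τ).charpoly.roots) ∧
    sSup (spectrum ℝ (helm G o τ)) =
      max (sSup (spectrum ℝ ((bMat G o)ᵀ * bMat G o)))
        (sSup (spectrum ℝ
          ((3 : ℝ) • (1 : Matrix (Triangle G) (Triangle G) ℝ) + triAdj G o τ))) :=
  statement6_general G o τ

end HelmPaper
end

section
/- Let G be a finite simple graph with an orientation of its edges and triangles. The Helmholtzian matrix H(G) is reducible if and only if there is a partition of the edge set E = E₁ ∪ E₂ into two non-empty parts such that for every pair of edges e₁ ∈ E₁ and e₂ ∈ E₂, either e₁ and e₂ lie in a common triangle of G, or e₁ and e₂ share no endpoint. -/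
open scoped Classical
open scoped Matrix

namespace HelmPaper

variable {V : Type} [Fintype V] [DecidableEq V]

/-- A square matrix is *reducible* if some simultaneous permutation of its rows and
columns puts it in block diagonal form with two non-trivial square diagonal blocks. -/
def MatReducible {α : Type} [Fintype α] [DecidableEq α] (M : Matrix α α ℝ) : Prop :=
  ∃ (p q : ℕ), 0 < p ∧ 0 < q ∧
    ∃ (σ : α ≃ (Fin p ⊕ Fin q)) (A : Matrix (Fin p) (Fin p) ℝ)
      (D : Matrix (Fin q) (Fin q) ℝ),
      Matrix.reindex σ σ M = Matrix.fromBlocks A 0 0 D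

end HelmPaper

/-!
For distinct edges `e ≠ f`, the entry `H e f` is the vertex term `(B Bᵀ) e f`, which is `±1` if
`e` and `f` share an endpoint and `0` otherwise, plus the triangle term `(Cᵀ C) e f`, which is the
contribution of the unique triangle containing both edges, if there is one. When there is such a
triangle, the two terms cancel. Hence `H e f = 0` exactly when `e` and `f` lie in a common
triangle or are disjoint, and a symmetric matrix is reducible exactly when its index set splits
into two non-empty parts with vanishing cross entries.
-/

theorem Sym2.exists_mem_notMem_of_ne {α : Type*} {e f : Sym2 α} (hf : ¬f.IsDiag) (hef : e ≠ f) :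
    ∃ w ∈ f, w ∉ e := by
  induction f using Sym2.ind with
  | _ a b =>
    by_contra! h
    exact hef (Sym2.eq_of_ne_mem (Sym2.mk_isDiag_iff.not.1 hf) (h a (Sym2.mem_mk_left a b))
      (h b (Sym2.mem_mk_right a b)) (Sym2.mem_mk_left a b) (Sym2.mem_mk_right a b))

namespace HelmPaper

section Reducible

variable {α : Type} [Fintype α] [DecidableEq α] {M : Matrix α α ℝ}

theorem MatReducible.exists_partition (h : MatReducible M) :
    ∃ E₁ E₂ : Set α, E₁.Nonempty ∧ E₂.Nonempty ∧ E₁ ∪ E₂ = Set.univ ∧ Disjoint E₁ E₂ ∧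
      ∀ a ∈ E₁, ∀ b ∈ E₂, M a b = 0 := by
  obtain ⟨p, q, hp, hq, σ, A, D, hM⟩ := h
  refine ⟨σ ⁻¹' Set.range Sum.inl, σ ⁻¹' Set.range Sum.inr,
    ⟨σ.symm (Sum.inl ⟨0, hp⟩), by simp⟩, ⟨σ.symm (Sum.inr ⟨0, hq⟩), by simp⟩, ?_, ?_, ?_⟩
  · rw [← Set.preimage_union, Set.range_inl_union_range_inr, Set.preimage_univ]
  · exact Set.isCompl_range_inl_range_inr.disjoint.preimage σ
  · rintro a ⟨i, hi⟩ b ⟨j, hj⟩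
    rw [← σ.symm_apply_apply a, ← σ.symm_apply_apply b, ← hi, ← hj]
    simpa using congrFun₂ hM (Sum.inl i) (Sum.inr j)

theorem matReducible_of_compl {S : Set α} (hS : S.Nonempty) (hSc : Sᶜ.Nonempty)
    (h₁₂ : ∀ a ∈ S, ∀ b ∈ Sᶜ, M a b = 0) (h₂₁ : ∀ a ∈ S, ∀ b ∈ Sᶜ, M b a = 0) :
    MatReducible M := by
  let σ : α ≃ Fin (Fintype.card S) ⊕ Fin (Fintype.card ↥Sᶜ) :=
    (Equiv.Set.sumCompl S).symm.trans (Equiv.sumCongr (Fintype.equivFin S) (Fintype.equivFin ↥Sᶜ))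
  have hl (i) : σ.symm (Sum.inl i) ∈ S := by simp [σ]
  have hr (j) : σ.symm (Sum.inr j) ∈ Sᶜ := by simp [σ]
  set N := Matrix.reindex σ σ M
  have hN₁₂ : N.toBlocks₁₂ = 0 := by ext i j; exact h₁₂ _ (hl i) _ (hr j)
  have hN₂₁ : N.toBlocks₂₁ = 0 := by ext i j; exact h₂₁ _ (hl j) _ (hr i)
  refine ⟨_, _, Fintype.card_pos_iff.2 hS.to_subtype, Fintype.card_pos_iff.2 hSc.to_subtype, σ,
    N.toBlocks₁₁, N.toBlocks₂₂, ?_⟩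
  rw [← hN₁₂, ← hN₂₁, Matrix.fromBlocks_toBlocks]

theorem matReducible_iff_exists_partition (hM : M.IsSymm) :
    MatReducible M ↔ ∃ E₁ E₂ : Set α, E₁.Nonempty ∧ E₂.Nonempty ∧
      E₁ ∪ E₂ = Set.univ ∧ Disjoint E₁ E₂ ∧ ∀ a ∈ E₁, ∀ b ∈ E₂, M a b = 0 := by
  refine ⟨MatReducible.exists_partition, ?_⟩
  rintro ⟨E₁, E₂, h₁, h₂, hunion, hdisj, hzero⟩
  obtain rfl : E₁ᶜ = E₂ := IsCompl.compl_eq ⟨hdisj, codisjoint_iff.2 hunion⟩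
  exact matReducible_of_compl h₁ h₂ hzero fun a ha b hb => (hM.apply a b).trans (hzero a ha b hb)

end Reducible

section Incidence

variable {V : Type} {G : SimpleGraph V}

theorem Triangle.val_eq_insert {t : Triangle G} {e : Sym2 V} (he : e ∈ G.edgeSet)
    (het : EdgeInTri G e t) {w : V} (hw : w ∈ t.val) (hwe : w ∉ e) :
    t.val = insert w e.toFinset := by
  refine (Finset.eq_of_subset_of_card_le ?_ ?_).symm
  · exact Finset.insert_subset hw fun v hv => het v (Sym2.mem_toFinset.1 hv)
  · rw [t.2.1, Finset.card_insert_of_notMem (mt Sym2.mem_toFinset.1 hwe),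
      Sym2.card_toFinset_of_not_isDiag _ (G.not_isDiag_of_mem_edgeSet he)]

theorem Triangle.eq_of_edgeInTri {t t' : Triangle G} {e f : G.edgeSet} (hef : e ≠ f)
    (het : EdgeInTri G e t) (hft : EdgeInTri G f t)
    (het' : EdgeInTri G e t') (hft' : EdgeInTri G f t') : t = t' := by
  obtain ⟨w, hwf, hwe⟩ :=
    Sym2.exists_mem_notMem_of_ne (G.not_isDiag_of_mem_edgeSet f.2) (Subtype.coe_ne_coe.2 hef)
  exact Subtype.ext <| (val_eq_insert e.2 het (hft w hwf) hwe).trans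
    (val_eq_insert e.2 het' (hft' w hwf) hwe).symm

namespace Orientation

variable (o : Orientation G)

theorem head_ne_tail_s8 (e : G.edgeSet) : o.head e ≠ o.tail e := by
  have h := e.2
  rw [o.consistent e, SimpleGraph.mem_edgeSet] at h
  exact h.ne

theorem mem_iff (e : G.edgeSet) {v : V} : v ∈ (e : Sym2 V) ↔ v = o.head e ∨ v = o.tail e := by
  rw [o.consistent e, Sym2.mem_iff]

theorem edgeInTri_iff (e : G.edgeSet) (t : Triangle G) :
    EdgeInTri G e t ↔ o.head e ∈ t.val ∧ o.tail e ∈ t.val := by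
  rw [EdgeInTri, o.consistent e, Sym2.forall_mem_pair]

end Orientation

variable [DecidableEq V]

theorem TriOrientation.mem_iff (τ : TriOrientation G) (t : Triangle G) {v : V} :
    v ∈ t.val ↔ v = τ.fst t ∨ v = τ.snd t ∨ v = τ.trd t := by
  rw [← τ.consistent t]; simp

theorem TriOrientation.pairwise_ne (τ : TriOrientation G) (t : Triangle G) :
    τ.fst t ≠ τ.snd t ∧ τ.fst t ≠ τ.trd t ∧ τ.snd t ≠ τ.trd t := by
  have h : ({τ.fst t, τ.snd t, τ.trd t} : Finset V).card = 3 := by rw [τ.consistent t]; exact t.2.1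
  refine ⟨?_, ?_, ?_⟩ <;> intro heq <;> rw [heq] at h <;>
    simp only [Finset.mem_insert, Finset.mem_singleton, true_or, or_true,
      Finset.insert_eq_of_mem] at h <;>
    exact (Finset.card_le_two.trans_lt (by norm_num)).ne h

variable (o : Orientation G) (τ : TriOrientation G)

theorem bMat_eq_single_sub_single (e : G.edgeSet) :
    bMat G o e = Pi.single (o.head e) 1 - Pi.single (o.tail e) 1 := by
  ext v
  by_cases hh : v = o.head e <;> by_cases ht : v = o.tail e <;>
    simp_all [bMat, o.head_ne_tail_s8 e, (o.head_ne_tail_s8 e).symm]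

theorem bMat_apply_ne_zero_iff (e : G.edgeSet) (v : V) : bMat G o e v ≠ 0 ↔ v ∈ (e : Sym2 V) := by
  rw [o.mem_iff]
  unfold bMat
  split_ifs <;> simp_all

theorem cMat_eq_zero_of_not_edgeInTri {e : G.edgeSet} {t : Triangle G}
    (h : ¬EdgeInTri G e t) : cMat G o τ t e = 0 := by
  rw [o.edgeInTri_iff, τ.mem_iff, τ.mem_iff] at h
  unfold cMat Agrees Disagrees
  split_ifs <;> aesop

theorem cMat_mul_cMat_eq_zero {e f : G.edgeSet} {t : Triangle G}
    (h : ¬(EdgeInTri G e t ∧ EdgeInTri G f t)) : cMat G o τ t e * cMat G o τ t f = 0 := by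
  rcases not_and_or.1 h with het | hft
  · rw [cMat_eq_zero_of_not_edgeInTri o τ het, zero_mul]
  · rw [cMat_eq_zero_of_not_edgeInTri o τ hft, mul_zero]

/-- The edges meet in a single vertex `v` of `t`, and the right side is `-B e v * B f v`. Once both
edges are directed towards `v`, exactly one of them agrees with the cyclic orientation of `t`. -/
theorem cMat_mul_cMat_of_edgeInTri {e f : G.edgeSet} (hef : e ≠ f) {t : Triangle G}
    (het : EdgeInTri G e t) (hft : EdgeInTri G f t) :
    cMat G o τ t e * cMat G o τ t f = -(bMat G o f (o.head e) - bMat G o f (o.tail e)) := by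
  obtain ⟨h₁₂, h₁₃, h₂₃⟩ := τ.pairwise_ne t
  have hne : s(o.head e, o.tail e) ≠ s(o.head f, o.tail f) := by
    rw [← o.consistent, ← o.consistent]
    exact Subtype.coe_ne_coe.2 hef
  have he := o.head_ne_tail_s8 e
  have hf := o.head_ne_tail_s8 f
  rw [o.edgeInTri_iff, τ.mem_iff, τ.mem_iff] at het hft
  obtain ⟨he₁ | he₁ | he₁, he₂ | he₂ | he₂⟩ := het <;>
    obtain ⟨hf₁ | hf₁ | hf₁, hf₂ | hf₂ | hf₂⟩ := hft <;>
    simp_all [cMat, bMat, Agrees, Disagrees, h₁₂.symm, h₁₃.symm, h₂₃.symm]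

variable [Fintype V]

theorem bMat_mul_transpose_apply (e f : G.edgeSet) :
    (bMat G o * (bMat G o)ᵀ) e f = bMat G o f (o.head e) - bMat G o f (o.tail e) := by
  simp [Matrix.mul_apply', bMat_eq_single_sub_single]

theorem bMat_mul_transpose_apply_eq_zero_iff {e f : G.edgeSet} (hef : e ≠ f) :
    (bMat G o * (bMat G o)ᵀ) e f = 0 ↔ ¬∃ v, v ∈ (e : Sym2 V) ∧ v ∈ (f : Sym2 V) := by
  have hboth : ¬(o.head e ∈ (f : Sym2 V) ∧ o.tail e ∈ (f : Sym2 V)) := fun ⟨hh, ht⟩ =>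
    hef <| Subtype.ext <| Sym2.eq_of_ne_mem (o.head_ne_tail_s8 e) ((o.mem_iff e).2 (Or.inl rfl))
      ((o.mem_iff e).2 (Or.inr rfl)) hh ht
  simp only [bMat_mul_transpose_apply, o.mem_iff e, or_and_right, exists_or, exists_eq_left,
    ← bMat_apply_ne_zero_iff o f] at hboth ⊢
  rcases not_and_or.1 hboth with h | h <;> simp_all

theorem cMat_transpose_mul_apply (e f : G.edgeSet) :
    ((cMat G o τ)ᵀ * cMat G o τ) e f = ∑ t, cMat G o τ t e * cMat G o τ t f := by
  simp [Matrix.mul_apply]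

theorem cMat_transpose_mul_apply_eq_zero {e f : G.edgeSet}
    (h : ¬∃ t, EdgeInTri G e t ∧ EdgeInTri G f t) : ((cMat G o τ)ᵀ * cMat G o τ) e f = 0 := by
  rw [cMat_transpose_mul_apply]
  exact Finset.sum_eq_zero fun t _ => cMat_mul_cMat_eq_zero o τ fun h' => h ⟨t, h'⟩

theorem cMat_transpose_mul_apply_of_edgeInTri {e f : G.edgeSet} (hef : e ≠ f) {t : Triangle G}
    (het : EdgeInTri G e t) (hft : EdgeInTri G f t) :
    ((cMat G o τ)ᵀ * cMat G o τ) e f = -(bMat G o * (bMat G o)ᵀ) e f := by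
  rw [cMat_transpose_mul_apply, Finset.sum_eq_single t, bMat_mul_transpose_apply,
    cMat_mul_cMat_of_edgeInTri o τ hef het hft]
  · exact fun t' _ ht' => cMat_mul_cMat_eq_zero o τ fun ⟨het', hft'⟩ =>
      ht' (Triangle.eq_of_edgeInTri hef het' hft' het hft)
  · simp

theorem helm_isSymm : (helm G o τ).IsSymm := by
  simp only [Matrix.IsSymm, helm, Matrix.transpose_add, Matrix.transpose_mul,
    Matrix.transpose_transpose]

theorem helm_apply_eq_zero_iff {e f : G.edgeSet} (hef : e ≠ f) :
    helm G o τ e f = 0 ↔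
      (∃ t, EdgeInTri G e t ∧ EdgeInTri G f t) ∨ ¬∃ v, v ∈ (e : Sym2 V) ∧ v ∈ (f : Sym2 V) := by
  rw [helm, Matrix.add_apply]
  by_cases hT : ∃ t, EdgeInTri G e t ∧ EdgeInTri G f t
  · obtain ⟨t, het, hft⟩ := hT
    rw [cMat_transpose_mul_apply_of_edgeInTri o τ hef het hft, add_neg_cancel]
    exact iff_of_true rfl (Or.inl ⟨t, het, hft⟩)
  · rw [cMat_transpose_mul_apply_eq_zero o τ hT, add_zero,
      bMat_mul_transpose_apply_eq_zero_iff o hef, or_iff_right hT]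

end Incidence

variable {V : Type} [Fintype V] [DecidableEq V]

/-- `H(G)` is reducible if and only if the edge set of `G` can be
partitioned into two non-empty parts `E₁, E₂` such that every pair `e₁ ∈ E₁`, `e₂ ∈ E₂`
either lies in a common triangle of `G` or shares no endpoint. -/
theorem statement8 (G : SimpleGraph V) (o : Orientation G) (τ : TriOrientation G) :
    MatReducible (helm G o τ) ↔
      ∃ E₁ E₂ : Set G.edgeSet, E₁.Nonempty ∧ E₂.Nonempty ∧
        E₁ ∪ E₂ = Set.univ ∧ Disjoint E₁ E₂ ∧
        ∀ e₁ ∈ E₁, ∀ e₂ ∈ E₂,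
          (∃ t : Triangle G, EdgeInTri G (e₁ : Sym2 V) t ∧ EdgeInTri G (e₂ : Sym2 V) t) ∨
          ¬∃ v : V, v ∈ (e₁ : Sym2 V) ∧ v ∈ (e₂ : Sym2 V) := by
  rw [matReducible_iff_exists_partition (helm_isSymm o τ)]
  refine exists₂_congr fun E₁ E₂ => and_congr_right' <| and_congr_right' <| and_congr_right' <|
    and_congr_right fun hdisj => forall₂_congr fun e₁ h₁ => forall₂_congr fun e₂ h₂ =>
      helm_apply_eq_zero_iff o τ (hdisj.ne_of_mem h₁ h₂)

end HelmPaper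
end
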